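/- arXiv:2406.08584 — 9 statements merged into one kernel-verified Lean document; each statement's English description precedes it below -/
import Mathlib

section
/- Let {a_i}_{i∈ι} be an orthonormal basis of E, w ∈ E a unit vector with ⟨a_i, w⟩ ≠ 0 for every i, and B a linear operator on E with adjoint B†. Let P_w be the rank-one operator x ↦ ⟨w, x⟩ • w, let B_cl := Σ_i (⟨a_i, (B ∘ P_w − P_w ∘ B†) a_i⟩ / (2·|⟨a_i, w⟩|²)) • P_{a_i}, and let G := B ∘ P_w + P_w ∘ B† − (2·Re⟨w, B w⟩) • P_w. Then 4·(‖(B − B_cl) w‖² − |⟨w, (B − B_cl) w⟩|²) = Σ_i (Re⟨a_i, G a_i⟩)² / |⟨a_i, w⟩|². (Equivalently, δ_B A · Δ_w(B_nc) = 1/2, the exact uncertainty relation.) -/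
/-!
Write `c_i = ⟨a_i, w⟩` and let `λ_i = ⟨a_i, B w⟩ / c_i` be the weak values of `B`. The classical
part removes exactly the imaginary parts of the weak values: `(B - B_cl) w` has coordinates
`(Re λ_i) c_i`, so `B - B_cl` acts on `w` like the diagonal observable with eigenvalues `Re λ_i`,
and its variance in `w` is the variance of `Re λ` under the distribution `p_i = |c_i|²`, whose
mean is `Re⟨w, B w⟩`. On the other side `Re⟨a_i, G a_i⟩ = 2 p_i (Re λ_i - Re⟨w, B w⟩)`, so the
right-hand side is four times that same variance.
-/

/-- The rank-one operator `x ↦ ⟨u, x⟩ • u`. -/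
noncomputable def rankOne {E : Type*} [NormedAddCommGroup E] [InnerProductSpace ℂ E]
    (u : E) : E →ₗ[ℂ] E :=
  (LinearMap.toSpanSingleton ℂ E u).comp (innerSL ℂ u).toLinearMap

/-- The classical (diagonal, anti-Hermitian) part of `B` relative to the orthonormal basis
`a` and the state vector `w`. -/
noncomputable def classicalPart {E : Type*} [NormedAddCommGroup E] [InnerProductSpace ℂ E]
    [FiniteDimensional ℂ E] {ι : Type*} [Fintype ι]
    (a : OrthonormalBasis ι ℂ E) (w : E) (B : E →ₗ[ℂ] E) : E →ₗ[ℂ] E :=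
  ∑ i, ((inner ℂ (a i) ((B ∘ₗ rankOne w - rankOne w ∘ₗ LinearMap.adjoint B) (a i)) : ℂ) /
      (2 * (‖(inner ℂ (a i) w : ℂ)‖ ^ 2 : ℂ))) • rankOne (a i)

/-- The operator `G := B P_w + P_w B† − 2 Re⟨w, B w⟩ P_w`. -/
noncomputable def Gop {E : Type*} [NormedAddCommGroup E] [InnerProductSpace ℂ E]
    [FiniteDimensional ℂ E] (w : E) (B : E →ₗ[ℂ] E) : E →ₗ[ℂ] E :=
  B ∘ₗ rankOne w + rankOne w ∘ₗ LinearMap.adjoint B -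
    (((2 * (inner ℂ w (B w) : ℂ).re : ℝ) : ℂ)) • rankOne w

lemma Finset.sum_mul_sub_sq_of_sum_eq_one {ι R : Type*} [CommRing R] (s : Finset ι)
    (p x : ι → R) (hp : ∑ i ∈ s, p i = 1) :
    ∑ i ∈ s, p i * (x i - ∑ j ∈ s, p j * x j) ^ 2 =
      ∑ i ∈ s, p i * x i ^ 2 - (∑ i ∈ s, p i * x i) ^ 2 := by
  set m := ∑ j ∈ s, p j * x j
  calc ∑ i ∈ s, p i * (x i - m) ^ 2
      = ∑ i ∈ s, p i * x i ^ 2 - 2 * m * ∑ i ∈ s, p i * x i + m ^ 2 * ∑ i ∈ s, p i := by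
        simp only [Finset.mul_sum, ← Finset.sum_sub_distrib, ← Finset.sum_add_distrib]
        exact Finset.sum_congr rfl fun i _ => by ring
    _ = _ := by rw [hp]; ring

section

variable {E : Type*} [NormedAddCommGroup E] [InnerProductSpace ℂ E]

open ComplexConjugate

lemma rankOne_apply (u x : E) : rankOne u x = inner ℂ u x • u := rfl

noncomputable def weakValue (x w : E) (B : E →ₗ[ℂ] E) : ℂ :=
  inner ℂ x (B w) / inner ℂ x w

lemma inner_apply_eq_weakValue_mul {x w : E} (hx : inner ℂ x w ≠ 0) (B : E →ₗ[ℂ] E) :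
    inner ℂ x (B w) = weakValue x w B * inner ℂ x w :=
  (div_mul_cancel₀ _ hx).symm

lemma conj_inner_mul_inner_apply {x w : E} (hx : inner ℂ x w ≠ 0) (B : E →ₗ[ℂ] E) :
    conj (inner ℂ x w) * inner ℂ x (B w) = (‖inner ℂ x w‖ ^ 2 : ℝ) * weakValue x w B := by
  rw [inner_apply_eq_weakValue_mul hx, Complex.ofReal_pow, ← Complex.conj_mul']
  ring

variable {ι : Type*} [Fintype ι]

lemma OrthonormalBasis.norm_sq_sub_norm_inner_sq_eq_sum (a : OrthonormalBasis ι ℂ E)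
    {v w : E} (hw : ‖w‖ = 1) (x : ι → ℝ) (hv : ∀ i, inner ℂ (a i) v = x i * inner ℂ (a i) w) :
    ‖v‖ ^ 2 - ‖inner ℂ w v‖ ^ 2 =
      ∑ i, ‖inner ℂ (a i) w‖ ^ 2 * (x i - ∑ j, ‖inner ℂ (a j) w‖ ^ 2 * x j) ^ 2 := by
  have hp : ∑ i, ‖inner ℂ (a i) w‖ ^ 2 = 1 := by rw [a.sum_sq_norm_inner_right, hw, one_pow]
  have hnorm : ‖v‖ ^ 2 = ∑ i, ‖inner ℂ (a i) w‖ ^ 2 * x i ^ 2 := by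
    rw [← a.sum_sq_norm_inner_right v]
    refine Finset.sum_congr rfl fun i _ => ?_
    rw [hv, norm_mul, Complex.norm_real, Real.norm_eq_abs, mul_pow, sq_abs, mul_comm]
  have hinner : inner ℂ w v = (∑ i, ‖inner ℂ (a i) w‖ ^ 2 * x i : ℝ) := by
    rw [← a.sum_inner_mul_inner w v]
    push_cast
    refine Finset.sum_congr rfl fun i _ => ?_
    rw [hv, ← inner_conj_symm w (a i), ← Complex.conj_mul']
    ring
  rw [hnorm, hinner, Complex.norm_real, Real.norm_eq_abs, sq_abs,
    Finset.sum_mul_sub_sq_of_sum_eq_one _ _ _ hp]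

lemma sum_norm_sq_mul_re_weakValue (a : OrthonormalBasis ι ℂ E) {w : E}
    (hne : ∀ i, inner ℂ (a i) w ≠ 0) (B : E →ₗ[ℂ] E) :
    ∑ i, ‖inner ℂ (a i) w‖ ^ 2 * (weakValue (a i) w B).re = (inner ℂ w (B w)).re := by
  rw [← a.sum_inner_mul_inner w (B w), Complex.re_sum]
  refine Finset.sum_congr rfl fun i _ => ?_
  rw [← inner_conj_symm w (a i), conj_inner_mul_inner_apply (hne i), Complex.re_ofReal_mul]

variable [FiniteDimensional ℂ E]

lemma inner_comp_rankOne_sub_rankOne_comp_adjoint_apply (w : E) (B : E →ₗ[ℂ] E) (x : E) :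
    inner ℂ x ((B ∘ₗ rankOne w - rankOne w ∘ₗ LinearMap.adjoint B) x) =
      conj (inner ℂ x w) * inner ℂ x (B w) - conj (conj (inner ℂ x w) * inner ℂ x (B w)) := by
  simp only [LinearMap.sub_apply, LinearMap.comp_apply, rankOne_apply, map_smul,
    inner_smul_right, LinearMap.adjoint_inner_right, inner_sub_right, map_mul, inner_conj_symm]
  ring

lemma inner_Gop_apply (w : E) (B : E →ₗ[ℂ] E) (x : E) :
    inner ℂ x (Gop w B x) =
      conj (inner ℂ x w) * inner ℂ x (B w) + conj (conj (inner ℂ x w) * inner ℂ x (B w)) -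
        (2 * (inner ℂ w (B w)).re : ℝ) * conj (inner ℂ x w) * inner ℂ x w := by
  simp only [Gop, LinearMap.sub_apply, LinearMap.add_apply, LinearMap.comp_apply,
    LinearMap.smul_apply, rankOne_apply, map_smul, inner_smul_right,
    LinearMap.adjoint_inner_right, inner_sub_right, inner_add_right, map_mul,
    inner_conj_symm]
  ring

lemma inner_classicalPart_apply_self (a : OrthonormalBasis ι ℂ E) (w : E) (B : E →ₗ[ℂ] E)
    (j : ι) :
    inner ℂ (a j) (classicalPart a w B w) =
      ((weakValue (a j) w B).im * Complex.I) * inner ℂ (a j) w := by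
  have hsum : classicalPart a w B w = ∑ i, ((inner ℂ (a i)
      ((B ∘ₗ rankOne w - rankOne w ∘ₗ LinearMap.adjoint B) (a i))) /
        (2 * (‖inner ℂ (a i) w‖ ^ 2 : ℂ)) * inner ℂ (a i) w) • a i := by
    simp only [classicalPart, LinearMap.sum_apply, LinearMap.smul_apply, rankOne_apply, smul_smul]
  rw [hsum, a.orthonormal.inner_right_fintype]
  by_cases hj : inner ℂ (a j) w = 0
  · simp [hj]
  rw [inner_comp_rankOne_sub_rankOne_comp_adjoint_apply, conj_inner_mul_inner_apply hj,
    Complex.sub_conj, Complex.im_ofReal_mul]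
  have : (‖inner ℂ (a j) w‖ : ℂ) ≠ 0 := by exact_mod_cast norm_ne_zero_iff.mpr hj
  push_cast
  field_simp

lemma inner_sub_classicalPart_apply_self (a : OrthonormalBasis ι ℂ E) {w : E}
    (B : E →ₗ[ℂ] E) {j : ι} (hj : inner ℂ (a j) w ≠ 0) :
    inner ℂ (a j) ((B - classicalPart a w B) w) = (weakValue (a j) w B).re * inner ℂ (a j) w := by
  rw [LinearMap.sub_apply, inner_sub_right, inner_classicalPart_apply_self,
    inner_apply_eq_weakValue_mul hj]
  linear_combination (-inner ℂ (a j) w) * Complex.re_add_im (weakValue (a j) w B)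

lemma re_inner_Gop_apply {x w : E} (hx : inner ℂ x w ≠ 0) (B : E →ₗ[ℂ] E) :
    (inner ℂ x (Gop w B x)).re =
      2 * ‖inner ℂ x w‖ ^ 2 * ((weakValue x w B).re - (inner ℂ w (B w)).re) := by
  rw [inner_Gop_apply, Complex.add_conj, conj_inner_mul_inner_apply hx, mul_assoc,
    Complex.conj_mul']
  simp only [Complex.sub_re, Complex.ofReal_re, ← Complex.ofReal_pow,
    ← Complex.ofReal_mul, Complex.mul_re, Complex.ofReal_im]
  ring

end

/-- Proposition 2 (exact uncertainty relation): `δ_B A · Δ_w(B_nc) = 1/2`, in the form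
`4 Δ_w(B_nc)² = Σ_i (Re⟨a_i, G a_i⟩)² / |⟨a_i, w⟩|²`. -/
theorem exact_uncertainty_relation
    {E : Type*} [NormedAddCommGroup E] [InnerProductSpace ℂ E] [FiniteDimensional ℂ E]
    {ι : Type*} [Fintype ι] (a : OrthonormalBasis ι ℂ E)
    (w : E) (hw : ‖w‖ = 1) (hne : ∀ i, (inner ℂ (a i) w : ℂ) ≠ 0)
    (B : E →ₗ[ℂ] E) :
    4 * (‖(B - classicalPart a w B) w‖ ^ 2 -
        ‖(inner ℂ w ((B - classicalPart a w B) w) : ℂ)‖ ^ 2) =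
      ∑ i, ((inner ℂ (a i) (Gop w B (a i)) : ℂ).re) ^ 2 / ‖(inner ℂ (a i) w : ℂ)‖ ^ 2 := by
  rw [a.norm_sq_sub_norm_inner_sq_eq_sum hw _
      fun j => inner_sub_classicalPart_apply_self a B (hne j),
    sum_norm_sq_mul_re_weakValue a hne B, Finset.mul_sum]
  refine Finset.sum_congr rfl fun i _ => ?_
  have : ‖inner ℂ (a i) w‖ ≠ 0 := norm_ne_zero_iff.mpr (hne i)
  rw [re_inner_Gop_apply (hne i)]
  field_simp
  ring
end

section
/- Let T > 0, let L : ℝ → (E →ₗ[ℂ] E) be a time-dependent family of linear operators, and let v : ℝ → E be differentiable on [0,T] with ‖v t‖ = 1 for all t ∈ [0,T], satisfying the normalized master equation v'(t) = L t (v t) − Re⟨v t, L t (v t)⟩ • v t on [0,T]. If the speed function t ↦ √(‖L t (v t)‖² − |⟨v t, L t (v t)⟩|²) is integrable on [0,T], then Real.arccos ‖⟨v 0, v T⟩‖ ≤ ∫₀ᵀ √(‖L t (v t)‖² − |⟨v t, L t (v t)⟩|²) dt. -/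
/-!
Put `a t = ⟪v 0, v t⟫` and `p = ‖a‖²`. In the master equation the imaginary part of
`⟪v, L v⟫` only rotates the phase of `a`, so `p' = 2 Re(ā ⟪v 0, w⟫)` with `w = L v - ⟪v, L v⟫ • v`,
a vector orthogonal to `v` whose length is the variance `Δ`. Only the component of `v 0` orthogonal
to `v t`, of length `√(1 - p)`, pairs with `w`; hence `|p'| ≤ 2 Δ √(p (1 - p))`, i.e. the angle
`arccos √p` moves at speed at most `Δ`, and integrating gives the bound. The singularities of
`arccos ∘ √` at `p = 0, 1` are avoided by running the argument for `(p + ε) / (1 + 2 ε)`, which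
stays in `(0, 1)` and obeys the same inequality, and letting `ε → 0`.
-/

open Set Topology MeasureTheory Real
open scoped InnerProductSpace

theorem hasDerivAt_arccos_sqrt {r : ℝ → ℝ} {r' t : ℝ} (hr : HasDerivAt r r' t)
    (h0 : 0 < r t) (h1 : r t < 1) :
    HasDerivAt (fun s => arccos √(r s)) (-r' / (2 * √(r t * (1 - r t)))) t := by
  have hsqrt_lt : √(r t) < 1 := (sqrt_lt' one_pos).2 (by linarith)
  have hsqrt_pos : 0 < √(r t) := sqrt_pos.2 h0
  refine ((hasDerivAt_arccos (by linarith) hsqrt_lt.ne).comp t (hr.sqrt h0.ne')).congr_deriv ?_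
  rw [sq_sqrt h0.le, sqrt_mul h0.le]
  field_simp

theorem arccos_sqrt_sub_le_integral_of_mem_Ioo {r r' Δ : ℝ → ℝ} {a b : ℝ} (hab : a ≤ b)
    (hr : ∀ t ∈ Icc a b, HasDerivAt r (r' t) t) (hr01 : ∀ t ∈ Icc a b, r t ∈ Ioo 0 1)
    (hbound : ∀ t ∈ Icc a b, |r' t| ≤ 2 * Δ t * √(r t * (1 - r t)))
    (hΔ : IntervalIntegrable Δ volume a b) :
    arccos √(r b) - arccos √(r a) ≤ ∫ t in a..b, Δ t := by
  have hderiv : ∀ t ∈ Icc a b,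
      HasDerivAt (fun s => arccos √(r s)) (-r' t / (2 * √(r t * (1 - r t)))) t :=
    fun t ht => hasDerivAt_arccos_sqrt (hr t ht) (hr01 t ht).1 (hr01 t ht).2
  refine intervalIntegral.sub_le_integral_of_hasDeriv_right_of_le hab
    (fun t ht => (hderiv t ht).continuousAt.continuousWithinAt)
    (fun t ht => (hderiv t (Ioo_subset_Icc_self ht)).hasDerivWithinAt)
    ((intervalIntegrable_iff_integrableOn_Icc_of_le hab).1 hΔ) fun t ht => ?_
  obtain ⟨h0, h1⟩ := hr01 t (Ioo_subset_Icc_self ht)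
  have hpos : 0 < 2 * √(r t * (1 - r t)) := by
    have : 0 < r t * (1 - r t) := mul_pos h0 (by linarith)
    positivity
  rw [div_le_iff₀ hpos]
  linarith [neg_abs_le (r' t), hbound t (Ioo_subset_Icc_self ht)]

theorem arccos_sqrt_sub_le_integral {p p' Δ : ℝ → ℝ} {a b : ℝ} (hab : a ≤ b)
    (hp : ∀ t ∈ Icc a b, HasDerivAt p (p' t) t) (hp01 : ∀ t ∈ Icc a b, p t ∈ Icc 0 1)
    (hΔ0 : ∀ t ∈ Icc a b, 0 ≤ Δ t)
    (hbound : ∀ t ∈ Icc a b, |p' t| ≤ 2 * Δ t * √(p t * (1 - p t)))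
    (hΔ : IntervalIntegrable Δ volume a b) :
    arccos √(p b) - arccos √(p a) ≤ ∫ t in a..b, Δ t := by
  set g : ℝ → ℝ := fun ε => arccos √((p b + ε) / (1 + 2 * ε)) - arccos √((p a + ε) / (1 + 2 * ε))
  have hg : ContinuousAt g 0 := by fun_prop (disch := norm_num)
  refine le_of_tendsto (x := 𝓝[>] 0) (by simpa [g] using hg.tendsto.mono_left nhdsWithin_le_nhds)
    (eventually_nhdsWithin_of_forall fun (ε : ℝ) (hε : 0 < ε) => ?_)
  have hc : 0 < 1 + 2 * ε := by linarith
  refine arccos_sqrt_sub_le_integral_of_mem_Ioo (r := fun t => (p t + ε) / (1 + 2 * ε))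
    (r' := fun t => p' t / (1 + 2 * ε)) hab (fun t ht => ((hp t ht).add_const ε).div_const _)
    (fun t ht => ?_) (fun t ht => ?_) hΔ
  · obtain ⟨h0, h1⟩ := hp01 t ht
    constructor
    · positivity
    · rw [div_lt_one hc]; linarith
  · obtain ⟨h0, h1⟩ := hp01 t ht
    have hsqrt : √(p t * (1 - p t)) ≤
        (1 + 2 * ε) * √((p t + ε) / (1 + 2 * ε) * (1 - (p t + ε) / (1 + 2 * ε))) := by
      have hprod : (p t + ε) / (1 + 2 * ε) * (1 - (p t + ε) / (1 + 2 * ε)) =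
          (p t + ε) * (1 - p t + ε) / (1 + 2 * ε) ^ 2 := by
        field_simp
        ring
      rw [hprod, sqrt_div' _ (sq_nonneg _), sqrt_sq hc.le, mul_div_cancel₀ _ hc.ne']
      exact sqrt_le_sqrt (by nlinarith)
    rw [abs_div, abs_of_pos hc, div_le_iff₀ hc]
    calc |p' t| ≤ 2 * Δ t * √(p t * (1 - p t)) := hbound t ht
      _ ≤ _ := by nlinarith [hΔ0 t ht]

section UnitVector

variable {𝕜 E : Type*} [RCLike 𝕜] [NormedAddCommGroup E] [InnerProductSpace 𝕜 E] {x : E}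

theorem inner_sub_inner_smul_self (hx : ‖x‖ = 1) (y : E) : ⟪x, y - ⟪x, y⟫_𝕜 • x⟫_𝕜 = 0 := by
  rw [inner_sub_right, inner_smul_right, inner_self_eq_norm_sq_to_K, hx]
  simp

theorem norm_sub_inner_smul_sq (hx : ‖x‖ = 1) (y : E) :
    ‖y - ⟪x, y⟫_𝕜 • x‖ ^ 2 = ‖y‖ ^ 2 - ‖⟪x, y⟫_𝕜‖ ^ 2 := by
  have horth : ⟪⟪x, y⟫_𝕜 • x, y - ⟪x, y⟫_𝕜 • x⟫_𝕜 = 0 := by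
    rw [inner_smul_left, inner_sub_inner_smul_self hx, mul_zero]
  have h := norm_add_sq_eq_norm_sq_add_norm_sq_of_inner_eq_zero _ _ horth
  rw [add_sub_cancel, norm_smul, hx, mul_one] at h
  nlinarith [h]

theorem norm_inner_le_of_inner_eq_zero (hx : ‖x‖ = 1) {w : E} (hw : ⟪x, w⟫_𝕜 = 0) (y : E) :
    ‖⟪y, w⟫_𝕜‖ ≤ √(‖y‖ ^ 2 - ‖⟪x, y⟫_𝕜‖ ^ 2) * ‖w‖ := by
  have h : ⟪y, w⟫_𝕜 = ⟪y - ⟪x, y⟫_𝕜 • x, w⟫_𝕜 := by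
    rw [inner_sub_left, inner_smul_left, hw, mul_zero, sub_zero]
  rw [h, ← norm_sub_inner_smul_sq hx, sqrt_sq (norm_nonneg _)]
  exact norm_inner_le_norm _ _

end UnitVector

theorem abs_inner_inner_drift_le {E : Type*} [NormedAddCommGroup E] [InnerProductSpace ℂ E]
    {x y : E} (hx : ‖x‖ = 1) (hy : ‖y‖ = 1) (u : E) :
    |⟪⟪x, y⟫_ℂ, ⟪x, u - (⟪y, u⟫_ℂ).re • y⟫_ℂ⟫_ℝ| ≤
      ‖⟪x, y⟫_ℂ‖ * √(1 - ‖⟪x, y⟫_ℂ‖ ^ 2) * ‖u - ⟪y, u⟫_ℂ • y‖ := by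
  set z := ⟪y, u⟫_ℂ
  set a := ⟪x, y⟫_ℂ
  set w := u - z • y
  have hdrift : ⟪x, u - z.re • y⟫_ℂ = ⟪x, w⟫_ℂ + (z - z.re) * a := by
    rw [← inner_smul_right, ← inner_add_right, ← Complex.coe_smul]
    congr 1
    simp only [w]
    module
  have hrot : ⟪a, (z - z.re) * a⟫_ℝ = 0 := by
    rw [Complex.inner, mul_assoc, Complex.mul_conj, Complex.re_mul_ofReal]
    simp
  have hw : ‖⟪x, w⟫_ℂ‖ ≤ √(1 - ‖a‖ ^ 2) * ‖w‖ := by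
    have h := norm_inner_le_of_inner_eq_zero hy (inner_sub_inner_smul_self (𝕜 := ℂ) hy u) x
    rwa [hx, one_pow, norm_inner_symm y x] at h
  rw [hdrift, inner_add_right, hrot, add_zero, mul_assoc]
  exact (abs_real_inner_le_norm _ _).trans (mul_le_mul_of_nonneg_left hw (norm_nonneg _))

theorem quantum_speed_limit_MT_general
    {E : Type*} [NormedAddCommGroup E] [InnerProductSpace ℂ E]
    (T : ℝ) (hT : 0 < T) (L : ℝ → (E →ₗ[ℂ] E)) (v : ℝ → E)
    (hnorm : ∀ t ∈ Set.Icc (0 : ℝ) T, ‖v t‖ = 1)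
    (hode : ∀ t ∈ Set.Icc (0 : ℝ) T,
      HasDerivAt v (L t (v t) - (inner ℂ (v t) (L t (v t)) : ℂ).re • v t) t)
    (hint : IntervalIntegrable
      (fun t => Real.sqrt (‖L t (v t)‖ ^ 2 - ‖(inner ℂ (v t) (L t (v t)) : ℂ)‖ ^ 2))
      MeasureTheory.volume 0 T) :
    Real.arccos ‖(inner ℂ (v 0) (v T) : ℂ)‖ ≤
      ∫ t in (0 : ℝ)..T,
        Real.sqrt (‖L t (v t)‖ ^ 2 - ‖(inner ℂ (v t) (L t (v t)) : ℂ)‖ ^ 2) := by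
  have hv0 : ‖v 0‖ = 1 := hnorm 0 ⟨le_rfl, hT.le⟩
  have hderiv : ∀ t ∈ Icc 0 T, HasDerivAt (fun s => ‖⟪v 0, v s⟫_ℂ‖ ^ 2)
      (2 * ⟪⟪v 0, v t⟫_ℂ, ⟪v 0, L t (v t) - (⟪v t, L t (v t)⟫_ℂ).re • v t⟫_ℂ⟫_ℝ) t := by
    intro t ht
    have h := ((hasDerivAt_const t (v 0)).inner ℂ (hode t ht)).norm_sq
    rwa [inner_zero_left, add_zero] at h
  have hfidelity : ∀ t ∈ Icc 0 T, ‖⟪v 0, v t⟫_ℂ‖ ^ 2 ∈ Icc 0 1 := by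
    intro t ht
    have h := norm_inner_le_norm (𝕜 := ℂ) (v 0) (v t)
    rw [hv0, hnorm t ht, one_mul] at h
    exact ⟨by positivity, pow_le_one₀ (norm_nonneg _) h⟩
  have hbound : ∀ t ∈ Icc 0 T,
      |2 * ⟪⟪v 0, v t⟫_ℂ, ⟪v 0, L t (v t) - (⟪v t, L t (v t)⟫_ℂ).re • v t⟫_ℂ⟫_ℝ| ≤
        2 * √(‖L t (v t)‖ ^ 2 - ‖⟪v t, L t (v t)⟫_ℂ‖ ^ 2) *
          √(‖⟪v 0, v t⟫_ℂ‖ ^ 2 * (1 - ‖⟪v 0, v t⟫_ℂ‖ ^ 2)) := by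
    intro t ht
    rw [← norm_sub_inner_smul_sq (hnorm t ht), sqrt_sq (norm_nonneg _),
      sqrt_mul (sq_nonneg _), sqrt_sq (norm_nonneg _), abs_mul, abs_two]
    have h := abs_inner_inner_drift_le hv0 (hnorm t ht) (L t (v t))
    linarith
  have h := arccos_sqrt_sub_le_integral hT.le hderiv hfidelity (fun t _ => sqrt_nonneg _)
    hbound hint
  simpa [hv0, sqrt_sq (norm_nonneg _)] using h

/-- Theorem 1 (inexact quantum speed limit in Liouville space): for a normalized curve `v`
obeying the normalized master equation `v' = L v − Re⟨v, L v⟩ v`, the Liouville-space angle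
between `v 0` and `v T` is bounded by the time integral of the variance of the Liouvillian. -/
theorem quantum_speed_limit_MT
    {E : Type*} [NormedAddCommGroup E] [InnerProductSpace ℂ E] [FiniteDimensional ℂ E]
    (T : ℝ) (hT : 0 < T) (L : ℝ → (E →ₗ[ℂ] E)) (v : ℝ → E)
    (hnorm : ∀ t ∈ Set.Icc (0 : ℝ) T, ‖v t‖ = 1)
    (hode : ∀ t ∈ Set.Icc (0 : ℝ) T,
      HasDerivAt v (L t (v t) - (inner ℂ (v t) (L t (v t)) : ℂ).re • v t) t)
    (hint : IntervalIntegrable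
      (fun t => Real.sqrt (‖L t (v t)‖ ^ 2 - ‖(inner ℂ (v t) (L t (v t)) : ℂ)‖ ^ 2))
      MeasureTheory.volume 0 T) :
    Real.arccos ‖(inner ℂ (v 0) (v T) : ℂ)‖ ≤
      ∫ t in (0 : ℝ)..T,
        Real.sqrt (‖L t (v t)‖ ^ 2 - ‖(inner ℂ (v t) (L t (v t)) : ℂ)‖ ^ 2) :=
  quantum_speed_limit_MT_general T hT L v hnorm hode hint
end

section
/- Let T > 0 and let v : ℝ → E be differentiable on [0,T] with ‖v t‖ = 1 for all t ∈ [0,T]. If the function t ↦ √(‖v'(t)‖² − |⟨v t, v'(t)⟩|²) is integrable on [0,T], then Real.arccos ‖⟨v 0, v T⟩‖ ≤ ∫₀ᵀ √(‖v'(t)‖² − |⟨v t, v'(t)⟩|²) dt. -/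
/-!
Let `s` be the Fubini–Study speed and `h t = ‖⟪v t, v T⟫‖`, so that `h T = 1` and the claim reads
`arccos (h 0) - arccos (h T) ≤ ∫ s`. Splitting `v'` and `v T` into their components along and
orthogonal to `v t`, and using `Re ⟪v, v'⟫ = 0`, gives `|(h²)'| ≤ 2 h √(1 - h²) s`, i.e.
`|θ'| ≤ s` for `θ = arccos h`. As `h` need not be differentiable, one works with
`cos 2θ = 2 h² - 1` instead; as `arccos` is not differentiable at `±1`, one first integrates the
derivative of `arccos (r (2 h² - 1))` for `r < 1` and then lets `r → 1`.
-/

open Set MeasureTheory Filter Topology Real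

section InnerProduct

variable {𝕜 E : Type*} [RCLike 𝕜] [NormedAddCommGroup E] [InnerProductSpace 𝕜 E]

local notation "⟪" x ", " y "⟫" => inner 𝕜 x y

theorem inner_sub_inner_smul_self_eq_zero {a : E} (ha : ‖a‖ = 1) (x : E) :
    ⟪a, x - ⟪a, x⟫ • a⟫ = 0 := by
  rw [inner_sub_right, inner_smul_right, inner_self_eq_norm_sq_to_K, ha]
  simp

theorem norm_sub_inner_smul_self_sq {a : E} (ha : ‖a‖ = 1) (x : E) :
    ‖x - ⟪a, x⟫ • a‖ ^ 2 = ‖x‖ ^ 2 - ‖⟪a, x⟫‖ ^ 2 := by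
  rw [norm_sub_sq (𝕜 := 𝕜), inner_smul_right, ← inner_conj_symm, RCLike.conj_mul, norm_smul, ha,
    RCLike.norm_conj]
  norm_cast
  ring

theorem abs_re_conj_inner_mul_inner_le {a b d : E} (ha : ‖a‖ = 1) (hb : ‖b‖ = 1)
    (hd : RCLike.re ⟪a, d⟫ = 0) :
    |RCLike.re (starRingEnd 𝕜 ⟪a, b⟫ * ⟪d, b⟫)| ≤
      ‖⟪a, b⟫‖ * √(1 - ‖⟪a, b⟫‖ ^ 2) * √(‖d‖ ^ 2 - ‖⟪a, d⟫‖ ^ 2) := by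
  set w := d - ⟪a, d⟫ • a
  set p := b - ⟪a, b⟫ • a
  have hwa : ⟪w, a⟫ = 0 := by rw [← inner_conj_symm, inner_sub_inner_smul_self_eq_zero ha, map_zero]
  have hap : ⟪a, p⟫ = 0 := inner_sub_inner_smul_self_eq_zero ha b
  have haa : ⟪a, a⟫ = 1 := by rw [inner_self_eq_norm_sq_to_K, ha]; simp
  have hdb : ⟪d, b⟫ = starRingEnd 𝕜 ⟪a, d⟫ * ⟪a, b⟫ + ⟪w, p⟫ := by
    calc ⟪d, b⟫ = ⟪w + ⟪a, d⟫ • a, p + ⟪a, b⟫ • a⟫ := by simp only [w, p, sub_add_cancel]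
      _ = _ := by
        simp only [inner_add_left, inner_add_right, inner_smul_left, inner_smul_right, hwa, hap,
          haa]
        ring
  have hre : RCLike.re (starRingEnd 𝕜 ⟪a, b⟫ * (starRingEnd 𝕜 ⟪a, d⟫ * ⟪a, b⟫)) = 0 := by
    rw [mul_left_comm, RCLike.conj_mul, ← RCLike.ofReal_pow, RCLike.re_mul_ofReal, RCLike.conj_re,
      hd, zero_mul]
  have hw : ‖w‖ = √(‖d‖ ^ 2 - ‖⟪a, d⟫‖ ^ 2) := by
    rw [← norm_sub_inner_smul_self_sq ha, sqrt_sq (norm_nonneg _)]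
  have hp : ‖p‖ = √(1 - ‖⟪a, b⟫‖ ^ 2) := by
    rw [← one_pow 2, ← hb, ← norm_sub_inner_smul_self_sq ha, sqrt_sq (norm_nonneg _)]
  rw [hdb, mul_add, map_add, hre, zero_add, ← hw, ← hp]
  calc _ ≤ ‖starRingEnd 𝕜 ⟪a, b⟫ * ⟪w, p⟫‖ := RCLike.abs_re_le_norm _
    _ ≤ ‖⟪a, b⟫‖ * (‖w‖ * ‖p‖) := by
      rw [norm_mul, RCLike.norm_conj]
      exact mul_le_mul_of_nonneg_left (norm_inner_le_norm w p) (norm_nonneg _)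
    _ = _ := by ring

theorem re_inner_eq_zero_of_eventually_norm_eq [NormedSpace ℝ E] {v : ℝ → E} {v' : E} {t : ℝ}
    (hv : HasDerivAt v v' t) (hconst : ∀ᶠ x in 𝓝 t, ‖v x‖ = ‖v t‖) :
    RCLike.re ⟪v t, v'⟫ = 0 := by
  have hconst' : (fun x => ⟪v x, v x⟫) =ᶠ[𝓝 t] fun _ => ⟪v t, v t⟫ := by
    filter_upwards [hconst] with x hx
    rw [inner_self_eq_norm_sq_to_K, inner_self_eq_norm_sq_to_K, hx]
  have h := (hv.inner 𝕜 hv).unique ((hasDerivAt_const t _).congr_of_eventuallyEq hconst')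
  have := congrArg RCLike.re h
  rw [map_add, inner_re_symm v', map_zero] at this
  linarith

end InnerProduct


theorem arccos_two_mul_sq_sub_one {x : ℝ} (hx : 0 ≤ x) : arccos (2 * x ^ 2 - 1) = 2 * arccos x := by
  rcases le_or_gt x 1 with hx1 | hx1
  · have hθ : arccos x ≤ π / 2 := arccos_le_pi_div_two.2 hx
    rw [← arccos_cos (x := 2 * arccos x) (by linarith [arccos_nonneg x]) (by linarith),
      cos_two_mul, cos_arccos (by linarith) hx1]
  · rw [arccos_eq_zero.2 hx1.le, arccos_eq_zero.2 (by nlinarith), mul_zero]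

theorem abs_mul_div_sqrt_one_sub_sq_le {r x y s : ℝ} (hr0 : 0 ≤ r) (hr1 : r < 1) (hx : |x| ≤ 1)
    (hs : 0 ≤ s) (hy : |y| ≤ √(1 - x ^ 2) * s) : |r * y| / √(1 - (r * x) ^ 2) ≤ s := by
  have hx2 : x ^ 2 ≤ 1 := sq_le_one_iff_abs_le_one x |>.2 hx
  have hrx : (r * x) ^ 2 ≤ x ^ 2 := by
    rw [mul_pow]
    exact mul_le_of_le_one_left (sq_nonneg x) (pow_le_one₀ hr0 hr1.le)
  have hpos : 0 < √(1 - (r * x) ^ 2) := sqrt_pos.2 (by rw [mul_pow] at hrx ⊢; nlinarith)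
  rw [div_le_iff₀ hpos, abs_mul, abs_of_nonneg hr0]
  calc r * |y| ≤ |y| := mul_le_of_le_one_left (abs_nonneg y) hr1.le
    _ ≤ √(1 - x ^ 2) * s := hy
    _ ≤ s * √(1 - (r * x) ^ 2) := by
      rw [mul_comm]; gcongr

section ArccosVariation

variable {u u' s : ℝ → ℝ} {a b : ℝ}

theorem arccos_mul_sub_arccos_mul_le_integral {r : ℝ} (hr0 : 0 ≤ r) (hr1 : r < 1) (hab : a ≤ b)
    (hu : ContinuousOn u (Icc a b)) (hu' : ∀ t ∈ Ioo a b, HasDerivAt u (u' t) t)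
    (hu1 : ∀ t ∈ Ioo a b, |u t| ≤ 1) (hbound : ∀ t ∈ Ioo a b, |u' t| ≤ √(1 - u t ^ 2) * s t)
    (hs0 : ∀ t ∈ Ioo a b, 0 ≤ s t) (hs : IntervalIntegrable s volume a b) :
    arccos (r * u a) - arccos (r * u b) ≤ ∫ t in a..b, s t := by
  have hderiv : ∀ t ∈ Ioo a b, HasDerivAt (fun t => -arccos (r * u t))
      (r * u' t / √(1 - (r * u t) ^ 2)) t := by
    intro t ht
    have hru : |r * u t| < 1 := by
      rw [abs_mul, abs_of_nonneg hr0]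
      nlinarith [hu1 t ht, abs_nonneg (u t)]
    rw [show r * u' t / √(1 - (r * u t) ^ 2) = -(-(1 / √(1 - (r * u t) ^ 2)) * (r * u' t)) by ring]
    exact ((hasDerivAt_arccos (abs_lt.1 hru).1.ne' (abs_lt.1 hru).2.ne).comp t
      ((hu' t ht).const_mul r)).neg
  have hFTC := intervalIntegral.sub_le_integral_of_hasDeriv_right_of_le
    (g := fun t => -arccos (r * u t)) hab
    (continuousOn_const.mul hu).arccos.neg (fun t ht => (hderiv t ht).hasDerivWithinAt)
    ((intervalIntegrable_iff_integrableOn_Icc_of_le hab).1 hs)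
    (fun t ht => (le_abs_self _).trans (by
      rw [abs_div, abs_of_nonneg (sqrt_nonneg _)]
      exact abs_mul_div_sqrt_one_sub_sq_le hr0 hr1 (hu1 t ht) (hs0 t ht) (hbound t ht)))
  linarith

theorem arccos_sub_arccos_le_integral (hab : a ≤ b)
    (hu : ContinuousOn u (Icc a b)) (hu' : ∀ t ∈ Ioo a b, HasDerivAt u (u' t) t)
    (hu1 : ∀ t ∈ Ioo a b, |u t| ≤ 1) (hbound : ∀ t ∈ Ioo a b, |u' t| ≤ √(1 - u t ^ 2) * s t)
    (hs0 : ∀ t ∈ Ioo a b, 0 ≤ s t) (hs : IntervalIntegrable s volume a b) :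
    arccos (u a) - arccos (u b) ≤ ∫ t in a..b, s t := by
  have hlim : Tendsto (fun r => arccos (r * u a) - arccos (r * u b)) (𝓝[<] 1)
      (𝓝 (arccos (u a) - arccos (u b))) := by
    have : Continuous (fun r => arccos (r * u a) - arccos (r * u b)) := by fun_prop
    simpa using this.continuousWithinAt.tendsto (x := 1) (s := Iio 1)
  refine le_of_tendsto hlim ?_
  filter_upwards [Ioo_mem_nhdsLT zero_lt_one] with r hr
  exact arccos_mul_sub_arccos_mul_le_integral hr.1.le hr.2 hab hu hu' hu1 hbound hs0 hs

end ArccosVariation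

theorem arccos_sub_arccos_le_integral_of_hasDerivAt_sq {h g' s : ℝ → ℝ} {a b : ℝ} (hab : a ≤ b)
    (hh : ContinuousOn h (Icc a b)) (hg' : ∀ t ∈ Ioo a b, HasDerivAt (fun t => h t ^ 2) (g' t) t)
    (h0 : ∀ t ∈ Icc a b, 0 ≤ h t) (h1 : ∀ t ∈ Ioo a b, h t ≤ 1)
    (hbound : ∀ t ∈ Ioo a b, |g' t| ≤ 2 * h t * √(1 - h t ^ 2) * s t)
    (hs0 : ∀ t ∈ Ioo a b, 0 ≤ s t) (hs : IntervalIntegrable s volume a b) :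
    arccos (h a) - arccos (h b) ≤ ∫ t in a..b, s t := by
  have hsqrt : ∀ t ∈ Ioo a b, √(1 - (2 * h t ^ 2 - 1) ^ 2) = 2 * h t * √(1 - h t ^ 2) := by
    intro t ht
    have h0t : 0 ≤ 2 * h t := by linarith [h0 t (Ioo_subset_Icc_self ht)]
    rw [show 1 - (2 * h t ^ 2 - 1) ^ 2 = (2 * h t) ^ 2 * (1 - h t ^ 2) by ring,
      sqrt_mul (sq_nonneg _), sqrt_sq h0t]
  have key := arccos_sub_arccos_le_integral (u := fun t => 2 * h t ^ 2 - 1)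
    (u' := fun t => 2 * g' t) (s := fun t => 2 * s t) hab
    ((continuousOn_const.mul (hh.pow 2)).sub continuousOn_const)
    (fun t ht => ((hg' t ht).const_mul 2).sub_const 1)
    (fun t ht => by
      have := h0 t (Ioo_subset_Icc_self ht)
      rw [abs_le]; constructor <;> nlinarith [h1 t ht])
    (fun t ht => by
      rw [hsqrt t ht, abs_mul, abs_two]; linarith [hbound t ht])
    (fun t ht => mul_nonneg zero_le_two (hs0 t ht)) (hs.const_mul 2)
  rw [arccos_two_mul_sq_sub_one (h0 a (left_mem_Icc.2 hab)),
    arccos_two_mul_sq_sub_one (h0 b (right_mem_Icc.2 hab)), intervalIntegral.integral_const_mul]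
    at key
  linarith

theorem fubini_study_speed_limit_general
    {E : Type*} [NormedAddCommGroup E] [InnerProductSpace ℂ E]
    (T : ℝ) (hT : 0 < T) (v v' : ℝ → E)
    (hnorm : ∀ t ∈ Set.Icc (0 : ℝ) T, ‖v t‖ = 1)
    (hderiv : ∀ t ∈ Set.Icc (0 : ℝ) T, HasDerivAt v (v' t) t)
    (hint : IntervalIntegrable
      (fun t => Real.sqrt (‖v' t‖ ^ 2 - ‖(inner ℂ (v t) (v' t) : ℂ)‖ ^ 2))
      MeasureTheory.volume 0 T) :
    Real.arccos ‖(inner ℂ (v 0) (v T) : ℂ)‖ ≤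
      ∫ t in (0 : ℝ)..T, Real.sqrt (‖v' t‖ ^ 2 - ‖(inner ℂ (v t) (v' t) : ℂ)‖ ^ 2) := by
  have hvT : ‖v T‖ = 1 := hnorm T (right_mem_Icc.2 hT.le)
  have hc : ∀ t ∈ Icc 0 T, HasDerivAt (fun t => inner ℂ (v t) (v T)) (inner ℂ (v' t) (v T)) t :=
    fun t ht => by simpa using (hderiv t ht).inner ℂ (hasDerivAt_const t (v T))
  have hbound : ∀ t ∈ Ioo 0 T, |2 * inner ℝ (inner ℂ (v t) (v T)) (inner ℂ (v' t) (v T))| ≤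
      2 * ‖inner ℂ (v t) (v T)‖ * √(1 - ‖inner ℂ (v t) (v T)‖ ^ 2) *
        √(‖v' t‖ ^ 2 - ‖inner ℂ (v t) (v' t)‖ ^ 2) := by
    intro t ht
    have hvt := hnorm t (Ioo_subset_Icc_self ht)
    have hre : RCLike.re (inner ℂ (v t) (v' t)) = 0 :=
      re_inner_eq_zero_of_eventually_norm_eq (hderiv t (Ioo_subset_Icc_self ht)) <| by
        filter_upwards [Icc_mem_nhds ht.1 ht.2] with x hx
        rw [hnorm x hx, hvt]
    rw [Complex.inner, mul_comm (inner ℂ (v' t) _), abs_mul, abs_two, mul_assoc 2, mul_assoc 2]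
    exact mul_le_mul_of_nonneg_left (abs_re_conj_inner_mul_inner_le hvt hvT hre) zero_le_two
  have key := arccos_sub_arccos_le_integral_of_hasDerivAt_sq
    (h := fun t => ‖inner ℂ (v t) (v T)‖) hT.le
    (fun t ht => (hc t ht).continuousAt.norm.continuousWithinAt)
    (fun t ht => (hc t (Ioo_subset_Icc_self ht)).norm_sq) (fun _ _ => norm_nonneg _)
    (fun t ht => by
      simpa [hnorm t (Ioo_subset_Icc_self ht), hvT] using norm_inner_le_norm (𝕜 := ℂ) (v t) (v T))
    hbound (fun _ _ => sqrt_nonneg _) hint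
  simpa [inner_self_eq_norm_sq_to_K, hvT] using key

/-- Geometric quantum speed limit for arbitrary time-continuous normalized dynamics:
the Fubini–Study length of a normalized curve dominates the angle between its endpoints. -/
theorem fubini_study_speed_limit
    {E : Type*} [NormedAddCommGroup E] [InnerProductSpace ℂ E] [FiniteDimensional ℂ E]
    (T : ℝ) (hT : 0 < T) (v v' : ℝ → E)
    (hnorm : ∀ t ∈ Set.Icc (0 : ℝ) T, ‖v t‖ = 1)
    (hderiv : ∀ t ∈ Set.Icc (0 : ℝ) T, HasDerivAt v (v' t) t)
    (hint : IntervalIntegrable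
      (fun t => Real.sqrt (‖v' t‖ ^ 2 - ‖(inner ℂ (v t) (v' t) : ℂ)‖ ^ 2))
      MeasureTheory.volume 0 T) :
    Real.arccos ‖(inner ℂ (v 0) (v T) : ℂ)‖ ≤
      ∫ t in (0 : ℝ)..T, Real.sqrt (‖v' t‖ ^ 2 - ‖(inner ℂ (v t) (v' t) : ℂ)‖ ^ 2) :=
  fubini_study_speed_limit_general T hT v v' hnorm hderiv hint
end

section
/- Let u₀, u₁ ∈ E be orthonormal, let T > 0, let θ : ℝ → ℝ be differentiable and monotone nondecreasing on [0,T] with θ 0 = 0 and θ T ≤ π/2, and define v t := Real.cos (θ t) • u₀ + Real.sin (θ t) • u₁. Then ‖v t‖ = 1 for all t, and the Fubini–Study length equals the angle: ∫₀ᵀ √(‖v'(t)‖² − |⟨v t, v'(t)⟩|²) dt = Real.arccos ‖⟨v 0, v T⟩‖ = θ T. In other words, evolutions confined to the two-dimensional span of the initial vector and a fixed orthogonal vector, with monotonically decreasing overlap, saturate the quantum speed limit. -/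
open Real Set intervalIntegral

/-!
Along `t ↦ cos (θ t) • u₀ + sin (θ t) • u₁` the velocity is `θ' t` times the unit vector
`cos (θ t + π/2) • u₀ + sin (θ t + π/2) • u₁`, which is orthogonal to the state. Hence the
Fubini–Study speed is `|θ'|`, which is `θ'` because `θ` is monotone, and the length is
`θ T - θ 0 = θ T`. On the other hand the overlap `⟨v 0, v T⟩` is `cos (θ T)`, whose arccosine is
`θ T` since `θ T ∈ [0, π/2]`.
-/

/-- The Fubini–Study speed of a curve of unit vectors. -/
noncomputable def fubiniStudySpeed {E : Type*} [NormedAddCommGroup E] [InnerProductSpace ℂ E]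
    (γ : ℝ → E) (t : ℝ) : ℝ :=
  √(‖deriv γ t‖ ^ 2 - ‖(inner ℂ (γ t) (deriv γ t) : ℂ)‖ ^ 2)

theorem MonotoneOn.deriv_nonneg_of_mem_interior {f : ℝ → ℝ} {s : Set ℝ} {x : ℝ}
    (hf : MonotoneOn f s) (hx : x ∈ interior s) : 0 ≤ deriv f x := by
  rw [← derivWithin_of_mem_nhds (mem_interior_iff_mem_nhds.mp hx)]
  exact hf.derivWithin_nonneg

section GreatCircle

variable {E : Type*} [NormedAddCommGroup E] [InnerProductSpace ℂ E] {u₀ u₁ : E}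

theorem inner_smul_add_smul_of_orthonormal (h₀ : ‖u₀‖ = 1) (h₁ : ‖u₁‖ = 1)
    (horth : (inner ℂ u₀ u₁ : ℂ) = 0) (x y x' y' : ℝ) :
    (inner ℂ (x • u₀ + y • u₁) (x' • u₀ + y' • u₁) : ℂ) = ((x * x' + y * y' : ℝ) : ℂ) := by
  have h10 : (inner ℂ u₁ u₀ : ℂ) = 0 := inner_eq_zero_symm.mp horth
  simp only [inner_add_left, inner_add_right, inner_smul_left_eq_smul, inner_smul_right_eq_smul,
    inner_self_eq_norm_sq_to_K, h₀, h₁, horth, h10, Complex.real_smul]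
  push_cast
  ring

noncomputable def greatCircle (u₀ u₁ : E) (φ : ℝ) : E := cos φ • u₀ + sin φ • u₁

theorem inner_greatCircle (h₀ : ‖u₀‖ = 1) (h₁ : ‖u₁‖ = 1) (horth : (inner ℂ u₀ u₁ : ℂ) = 0)
    (φ ψ : ℝ) :
    (inner ℂ (greatCircle u₀ u₁ φ) (greatCircle u₀ u₁ ψ) : ℂ) = (cos (ψ - φ) : ℂ) := by
  rw [greatCircle, greatCircle, inner_smul_add_smul_of_orthonormal h₀ h₁ horth, cos_sub]
  ring_nf

theorem norm_greatCircle (h₀ : ‖u₀‖ = 1) (h₁ : ‖u₁‖ = 1) (horth : (inner ℂ u₀ u₁ : ℂ) = 0)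
    (φ : ℝ) : ‖greatCircle u₀ u₁ φ‖ = 1 := by
  rw [← pow_eq_one_iff_of_nonneg (norm_nonneg _) two_ne_zero, @norm_sq_eq_re_inner ℂ,
    inner_greatCircle h₀ h₁ horth, sub_self, cos_zero, RCLike.re_to_complex, Complex.ofReal_re]

theorem hasDerivAt_greatCircle (φ : ℝ) :
    HasDerivAt (greatCircle u₀ u₁) (greatCircle u₀ u₁ (φ + π / 2)) φ := by
  rw [greatCircle, cos_add_pi_div_two, sin_add_pi_div_two]
  exact ((hasDerivAt_cos φ).smul_const u₀).add ((hasDerivAt_sin φ).smul_const u₁)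

theorem fubiniStudySpeed_greatCircle_comp (h₀ : ‖u₀‖ = 1) (h₁ : ‖u₁‖ = 1)
    (horth : (inner ℂ u₀ u₁ : ℂ) = 0) {θ : ℝ → ℝ} {t : ℝ} (hθ : DifferentiableAt ℝ θ t) :
    fubiniStudySpeed (greatCircle u₀ u₁ ∘ θ) t = |deriv θ t| := by
  have hv := (hasDerivAt_greatCircle (u₀ := u₀) (u₁ := u₁) (θ t)).scomp t hθ.hasDerivAt
  have horth' : (inner ℂ (greatCircle u₀ u₁ (θ t)) (greatCircle u₀ u₁ (θ t + π / 2)) : ℂ) = 0 := by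
    rw [inner_greatCircle h₀ h₁ horth, add_sub_cancel_left, cos_pi_div_two, Complex.ofReal_zero]
  rw [fubiniStudySpeed, hv.deriv, Function.comp_apply, inner_smul_right_eq_smul, horth',
    smul_zero, norm_zero, norm_smul, norm_greatCircle h₀ h₁ horth, Real.norm_eq_abs, mul_one,
    zero_pow two_ne_zero, sub_zero, sq_abs, sqrt_sq_eq_abs]

theorem integral_fubiniStudySpeed_greatCircle_comp (h₀ : ‖u₀‖ = 1) (h₁ : ‖u₁‖ = 1)
    (horth : (inner ℂ u₀ u₁ : ℂ) = 0) {θ : ℝ → ℝ} {a b : ℝ}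
    (hθdiff : DifferentiableOn ℝ θ (uIcc a b)) (hθmono : MonotoneOn θ (uIcc a b)) :
    ∫ t in a..b, fubiniStudySpeed (greatCircle u₀ u₁ ∘ θ) t = θ b - θ a := by
  have hdiff : ∀ t ∈ uIoo a b, DifferentiableAt ℝ θ t := fun t ht =>
    hθdiff.differentiableAt (Icc_mem_nhds ht.1 ht.2)
  have hspeed : EqOn (fubiniStudySpeed (greatCircle u₀ u₁ ∘ θ)) (deriv θ) (uIoo a b) := by
    intro t ht
    rw [fubiniStudySpeed_greatCircle_comp h₀ h₁ horth (hdiff t ht), abs_of_nonneg]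
    refine hθmono.deriv_nonneg_of_mem_interior ?_
    rwa [uIcc, interior_Icc]
  rw [integral_congr_uIoo hspeed,
    integral_deriv_eq_sub_uIoo hθdiff.continuousOn hdiff hθmono.intervalIntegrable_deriv]

end GreatCircle

theorem geodesic_saturates_speed_limit_general
    {E : Type*} [NormedAddCommGroup E] [InnerProductSpace ℂ E]
    (u₀ u₁ : E) (h₀ : ‖u₀‖ = 1) (h₁ : ‖u₁‖ = 1) (horth : (inner ℂ u₀ u₁ : ℂ) = 0)
    (T : ℝ) (hT : 0 < T) (θ : ℝ → ℝ)
    (hθdiff : DifferentiableOn ℝ θ (Set.Icc 0 T))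
    (hθmono : MonotoneOn θ (Set.Icc 0 T))
    (hθ0 : θ 0 = 0) (hθT : θ T ≤ Real.pi / 2) :
    let v : ℝ → E := fun t => Real.cos (θ t) • u₀ + Real.sin (θ t) • u₁
    (∀ t, ‖v t‖ = 1) ∧
    (∫ t in (0 : ℝ)..T,
        Real.sqrt (‖deriv v t‖ ^ 2 - ‖(inner ℂ (v t) (deriv v t) : ℂ)‖ ^ 2)) =
      Real.arccos ‖(inner ℂ (v 0) (v T) : ℂ)‖ ∧
    Real.arccos ‖(inner ℂ (v 0) (v T) : ℂ)‖ = θ T := by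
  intro v
  have hθT_nonneg : 0 ≤ θ T :=
    hθ0 ▸ hθmono (left_mem_Icc.2 hT.le) (right_mem_Icc.2 hT.le) hT.le
  have harccos : arccos ‖(inner ℂ (v 0) (v T) : ℂ)‖ = θ T := by
    change arccos ‖(inner ℂ (greatCircle u₀ u₁ (θ 0)) (greatCircle u₀ u₁ (θ T)) : ℂ)‖ = θ T
    rw [inner_greatCircle h₀ h₁ horth, hθ0, sub_zero, Complex.norm_real, Real.norm_eq_abs,
      abs_of_nonneg (cos_nonneg_of_mem_Icc ⟨by linarith [pi_pos], hθT⟩)]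
    exact arccos_cos hθT_nonneg (by linarith [pi_pos])
  refine ⟨fun t => norm_greatCircle h₀ h₁ horth (θ t), ?_, harccos⟩
  rw [← uIcc_of_le hT.le] at hθdiff hθmono
  rw [harccos]
  exact (integral_fubiniStudySpeed_greatCircle_comp h₀ h₁ horth hθdiff hθmono).trans
    (by rw [hθ0, sub_zero])

/-- Corollary to Theorem 1: an evolution confined to the two-dimensional span of the initial
vector and a fixed orthogonal vector, with monotonically increasing angle, saturates the
quantum speed limit: the Fubini–Study length equals the Liouville space angle `θ T`. -/
theorem geodesic_saturates_speed_limit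
    {E : Type*} [NormedAddCommGroup E] [InnerProductSpace ℂ E] [FiniteDimensional ℂ E]
    (u₀ u₁ : E) (h₀ : ‖u₀‖ = 1) (h₁ : ‖u₁‖ = 1) (horth : (inner ℂ u₀ u₁ : ℂ) = 0)
    (T : ℝ) (hT : 0 < T) (θ : ℝ → ℝ)
    (hθdiff : DifferentiableOn ℝ θ (Set.Icc 0 T))
    (hθmono : MonotoneOn θ (Set.Icc 0 T))
    (hθ0 : θ 0 = 0) (hθT : θ T ≤ Real.pi / 2) :
    let v : ℝ → E := fun t => Real.cos (θ t) • u₀ + Real.sin (θ t) • u₁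
    (∀ t, ‖v t‖ = 1) ∧
    (∫ t in (0 : ℝ)..T,
        Real.sqrt (‖deriv v t‖ ^ 2 - ‖(inner ℂ (v t) (deriv v t) : ℂ)‖ ^ 2)) =
      Real.arccos ‖(inner ℂ (v 0) (v T) : ℂ)‖ ∧
    Real.arccos ‖(inner ℂ (v 0) (v T) : ℂ)‖ = θ T :=
  geodesic_saturates_speed_limit_general u₀ u₁ h₀ h₁ horth T hT θ hθdiff hθmono hθ0 hθT
end

section
/- Let A be a self-adjoint linear operator on E, D any linear operator on E, and w ∈ E a unit vector with ⟨w, A w⟩ = 0 and ⟨w, D w⟩ real. Set L := (−i) • A + D. Then the variance decomposes as (‖L w‖² − |⟨w, L w⟩|² : ℂ) = ‖A w‖² + (‖D w‖² − |⟨w, D w⟩|²) + Complex.I·(⟨A w, D w⟩ − ⟨D w, A w⟩); in particular the last (cross) term is real. -/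
open Complex ComplexConjugate

section InnerProductSpace

variable {E : Type*} [NormedAddCommGroup E] [InnerProductSpace ℂ E]

theorem im_I_mul_inner_sub_inner_swap (x y : E) :
    (I * (inner ℂ x y - inner ℂ y x)).im = 0 := by
  rw [← inner_conj_symm x y]
  generalize inner ℂ y x = z
  simp [Complex.mul_im]

theorem norm_neg_I_smul_add_sq (x y : E) :
    ((‖(-I) • x + y‖ ^ 2 : ℝ) : ℂ) =
      ((‖x‖ ^ 2 : ℝ) : ℂ) + ((‖y‖ ^ 2 : ℝ) : ℂ) + I * (inner ℂ x y - inner ℂ y x) := by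
  have norm_sq_eq_inner_self (v : E) : ((‖v‖ ^ 2 : ℝ) : ℂ) = inner ℂ v v := by
    rw [inner_self_eq_norm_sq_to_K]
    norm_cast
  simp only [norm_sq_eq_inner_self, inner_add_add_self, inner_smul_left,
    inner_smul_right, map_neg, conj_I]
  linear_combination (-inner ℂ x x) * I_sq

theorem inner_neg_I_smul_add_apply_of_inner_eq_zero {A : E →ₗ[ℂ] E} {w : E}
    (hAw : inner ℂ w (A w) = 0) (D : E →ₗ[ℂ] E) :
    inner ℂ w (((-I) • A + D) w) = inner ℂ w (D w) := by
  simp [inner_smul_right, hAw]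

end InnerProductSpace

theorem speed_decomposition_unitary_dissipative_general
    {E : Type*} [NormedAddCommGroup E] [InnerProductSpace ℂ E]
    (A D : E →ₗ[ℂ] E)
    (w : E)
    (hAw : (inner ℂ w (A w) : ℂ) = 0) :
    ((‖((-Complex.I) • A + D) w‖ ^ 2 -
        ‖(inner ℂ w (((-Complex.I) • A + D) w) : ℂ)‖ ^ 2 : ℝ) : ℂ) =
      ((‖A w‖ ^ 2 : ℝ) : ℂ) + ((‖D w‖ ^ 2 - ‖(inner ℂ w (D w) : ℂ)‖ ^ 2 : ℝ) : ℂ) +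
        Complex.I * ((inner ℂ (A w) (D w) : ℂ) - (inner ℂ (D w) (A w) : ℂ)) ∧
    (Complex.I * ((inner ℂ (A w) (D w) : ℂ) - (inner ℂ (D w) (A w) : ℂ))).im = 0 := by
  refine ⟨?_, im_I_mul_inner_sub_inner_swap _ _⟩
  have hnorm := norm_neg_I_smul_add_sq (A w) (D w)
  rw [inner_neg_I_smul_add_apply_of_inner_eq_zero hAw, LinearMap.add_apply, LinearMap.smul_apply]
  push_cast at hnorm ⊢
  rw [hnorm]
  ring

/-- Speed decomposition (Eq. (5) of the paper): writing `L = −i A + D` with `A` Hermitian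
(`⟨A⟩ = 0` in the state) and `D` the dissipative part (with real expectation), the variance
decomposes as `ΔL² = ΔA² + ΔD² + i (⟨A w, D w⟩ − ⟨D w, A w⟩)`, and the cross term is real. -/
theorem speed_decomposition_unitary_dissipative
    {E : Type*} [NormedAddCommGroup E] [InnerProductSpace ℂ E] [FiniteDimensional ℂ E]
    (A D : E →ₗ[ℂ] E) (hA : LinearMap.IsSymmetric A)
    (w : E) (hw : ‖w‖ = 1)
    (hAw : (inner ℂ w (A w) : ℂ) = 0) (hDw : (inner ℂ w (D w) : ℂ).im = 0) :
    ((‖((-Complex.I) • A + D) w‖ ^ 2 -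
        ‖(inner ℂ w (((-Complex.I) • A + D) w) : ℂ)‖ ^ 2 : ℝ) : ℂ) =
      ((‖A w‖ ^ 2 : ℝ) : ℂ) + ((‖D w‖ ^ 2 - ‖(inner ℂ w (D w) : ℂ)‖ ^ 2 : ℝ) : ℂ) +
        Complex.I * ((inner ℂ (A w) (D w) : ℂ) - (inner ℂ (D w) (A w) : ℂ)) ∧
    (Complex.I * ((inner ℂ (A w) (D w) : ℂ) - (inner ℂ (D w) (A w) : ℂ))).im = 0 :=
  speed_decomposition_unitary_dissipative_general A D w hAw
end

section
/- Let T > 0, let L : ℝ → (E →ₗ[ℂ] E) be continuous, and let v : ℝ → E be continuously differentiable on [0,T] with ‖v 0‖ = 1 and satisfying v'(t) = L t (v t) − Re⟨v t, L t (v t)⟩ • v t for all t ∈ [0,T]. Then ‖v t‖ = 1 for all t ∈ [0,T]; i.e., the normalized master equation preserves the norm of the state vector. -/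
/-!
Along the normalized flow `v' = y - Re⟪v, y⟫ • v` one has `Re⟪v, v'⟫ = Re⟪v, y⟫ (1 - ‖v‖²)`,
so `g = ‖v‖² - 1` solves the scalar linear equation `g' = -2 Re⟪v, L v⟫ g`. Its coefficient is
continuous, hence bounded on `[0, T]`, and Grönwall's inequality forces `g = 0` from `g 0 = 0`.
-/

open Set RCLike
open scoped InnerProductSpace

theorem eq_zero_of_hasDerivAt_smul_self_of_eq_zero {F : Type*} [NormedAddCommGroup F]
    [NormedSpace ℝ F] {f : ℝ → F} {k : ℝ → ℝ} {a b : ℝ} (hk : ContinuousOn k (Icc a b))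
    (hf : ∀ x ∈ Icc a b, HasDerivAt f (k x • f x) x) (ha : f a = 0) :
    ∀ x ∈ Icc a b, f x = 0 := by
  obtain ⟨K, hK⟩ := isCompact_Icc.exists_bound_of_continuousOn hk
  refine eq_zero_of_abs_deriv_le_mul_abs_self_of_eq_zero_right (K := K)
    (fun x hx ↦ (hf x hx).continuousAt.continuousWithinAt)
    (fun x hx ↦ (hf x (Ico_subset_Icc_self hx)).hasDerivWithinAt) ha fun x hx ↦ ?_
  rw [norm_smul]
  exact mul_le_mul_of_nonneg_right (hK x (Ico_subset_Icc_self hx)) (norm_nonneg _)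

section

variable {𝕜 E : Type*} [RCLike 𝕜] [NormedAddCommGroup E] [InnerProductSpace 𝕜 E]
  [NormedSpace ℝ E]

theorem HasDerivAt.norm_sq_re_inner {f : ℝ → E} {f' : E} {x : ℝ} (hf : HasDerivAt f f' x) :
    HasDerivAt (‖f ·‖ ^ 2) (2 * re ⟪f x, f'⟫_𝕜) x := by
  have := (reCLM (K := 𝕜)).hasFDerivAt.comp_hasDerivAt x (hf.inner 𝕜 hf)
  simp only [Function.comp_def, reCLM_apply, inner_self_eq_norm_sq, map_add] at this
  rwa [inner_re_symm (𝕜 := 𝕜) f', ← two_mul] at this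

theorem re_inner_sub_re_inner_smul_self [IsScalarTower ℝ 𝕜 E] (x y : E) :
    re ⟪x, y - re ⟪x, y⟫_𝕜 • x⟫_𝕜 = re ⟪x, y⟫_𝕜 * (1 - ‖x‖ ^ 2) := by
  rw [inner_sub_right, real_smul_eq_coe_smul (K := 𝕜), inner_smul_real_right, map_sub, smul_re,
    inner_self_eq_norm_sq]
  ring

theorem HasDerivAt.norm_sq_sub_one_of_normalized [IsScalarTower ℝ 𝕜 E] {v : ℝ → E} {y : E}
    {t : ℝ} (hv : HasDerivAt v (y - re ⟪v t, y⟫_𝕜 • v t) t) :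
    HasDerivAt (fun s ↦ ‖v s‖ ^ 2 - 1) ((-2 * re ⟪v t, y⟫_𝕜) • (‖v t‖ ^ 2 - 1)) t := by
  refine ((hv.norm_sq_re_inner (𝕜 := 𝕜)).sub_const 1).congr_deriv ?_
  rw [re_inner_sub_re_inner_smul_self, smul_eq_mul]
  ring

end

theorem normalized_master_equation_preserves_norm_general
    {E : Type*} [NormedAddCommGroup E] [InnerProductSpace ℂ E]
    (T : ℝ) (L : ℝ → (E →L[ℂ] E)) (hL : Continuous L)
    (v : ℝ → E)
    (h0 : ‖v 0‖ = 1)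
    (hode : ∀ t ∈ Set.Icc (0 : ℝ) T,
      HasDerivAt v (L t (v t) - (inner ℂ (v t) (L t (v t)) : ℂ).re • v t) t) :
    ∀ t ∈ Set.Icc (0 : ℝ) T, ‖v t‖ = 1 := by
  have hv : ContinuousOn v (Icc 0 T) := fun t ht ↦ (hode t ht).continuousAt.continuousWithinAt
  have hcoeff : ContinuousOn (fun t ↦ -2 * re ⟪v t, L t (v t)⟫_ℂ) (Icc 0 T) :=
    continuousOn_const.mul
      (continuous_re.comp_continuousOn (hv.inner (hL.continuousOn.clm_apply hv)))
  have hnorm_sq := eq_zero_of_hasDerivAt_smul_self_of_eq_zero hcoeff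
    (fun t ht ↦ (hode t ht).norm_sq_sub_one_of_normalized) (by simp [h0])
  intro t ht
  have h := sub_eq_zero.mp (hnorm_sq t ht)
  rwa [pow_eq_one_iff_of_nonneg (norm_nonneg _) two_ne_zero] at h

/-- The normalized master equation preserves the norm of the state vector. -/
theorem normalized_master_equation_preserves_norm
    {E : Type*} [NormedAddCommGroup E] [InnerProductSpace ℂ E] [FiniteDimensional ℂ E]
    (T : ℝ) (hT : 0 < T) (L : ℝ → (E →L[ℂ] E)) (hL : Continuous L)
    (v : ℝ → E) (hv : ContDiffOn ℝ 1 v (Set.Icc 0 T))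
    (h0 : ‖v 0‖ = 1)
    (hode : ∀ t ∈ Set.Icc (0 : ℝ) T,
      HasDerivAt v (L t (v t) - (inner ℂ (v t) (L t (v t)) : ℂ).re • v t) t) :
    ∀ t ∈ Set.Icc (0 : ℝ) T, ‖v t‖ = 1 :=
  normalized_master_equation_preserves_norm_general T L hL v h0 hode
end

section
/- Let u, w ∈ E be unit vectors and let S be a self-adjoint continuous linear operator on E with ⟨u, S u⟩ = 0. Then |⟨w, S w⟩| ≤ 2·‖S‖·√(1 − |⟨u, w⟩|²), where ‖S‖ is the operator norm. Equivalently, ⟨w, S w⟩²/(4‖S‖²) + |⟨u, w⟩|² ≤ 1. -/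
/-!
Write `w = ⟪u, w⟫ • u + v` with `v ⟂ u`, so `‖v‖ = √(1 - |⟪u, w⟫|²)`. The expectation of `S` in
`⟪u, w⟫ • u` vanishes, and expectations are Lipschitz:
`|⟪w, S w⟫ - ⟪x, S x⟫| ≤ ‖S‖ ‖w - x‖ (‖w‖ + ‖x‖)`. With `x = ⟪u, w⟫ • u` this gives
`|⟪w, S w⟫| ≤ 2 ‖S‖ ‖v‖`.
-/

open scoped InnerProductSpace

section

variable {𝕜 E : Type*} [RCLike 𝕜] [NormedAddCommGroup E] [InnerProductSpace 𝕜 E]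

theorem ContinuousLinearMap.norm_inner_map_self_sub_le (S : E →L[𝕜] E) (w x : E) :
    ‖⟪w, S w⟫_𝕜 - ⟪x, S x⟫_𝕜‖ ≤ ‖S‖ * ‖w - x‖ * (‖w‖ + ‖x‖) := by
  have split : ⟪w, S w⟫_𝕜 - ⟪x, S x⟫_𝕜 = ⟪w - x, S w⟫_𝕜 + ⟪x, S (w - x)⟫_𝕜 := by
    rw [inner_sub_left, map_sub, inner_sub_right]; ring
  calc ‖⟪w, S w⟫_𝕜 - ⟪x, S x⟫_𝕜‖
      ≤ ‖w - x‖ * ‖S w‖ + ‖x‖ * ‖S (w - x)‖ := by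
        rw [split]
        exact (norm_add_le _ _).trans
          (add_le_add (norm_inner_le_norm _ _) (norm_inner_le_norm _ _))
    _ ≤ ‖w - x‖ * (‖S‖ * ‖w‖) + ‖x‖ * (‖S‖ * ‖w - x‖) := by
        gcongr <;> exact S.le_opNorm _
    _ = ‖S‖ * ‖w - x‖ * (‖w‖ + ‖x‖) := by ring

theorem inner_smul_map_smul_self (S : E →L[𝕜] E) (c : 𝕜) (u : E) :
    ⟪c • u, S (c • u)⟫_𝕜 = (‖c‖ : 𝕜) ^ 2 * ⟪u, S u⟫_𝕜 := by
  rw [map_smul, inner_smul_left, inner_smul_right, ← mul_assoc, RCLike.conj_mul]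

theorem norm_sub_inner_smul_sq_s17 {u : E} (hu : ‖u‖ = 1) (w : E) :
    ‖w - ⟪u, w⟫_𝕜 • u‖ ^ 2 = ‖w‖ ^ 2 - ‖⟪u, w⟫_𝕜‖ ^ 2 := by
  have hproj : ⟪w, ⟪u, w⟫_𝕜 • u⟫_𝕜 = (‖⟪u, w⟫_𝕜‖ : 𝕜) ^ 2 := by
    rw [inner_smul_right, ← inner_conj_symm, RCLike.conj_mul, RCLike.norm_conj]
  rw [norm_sub_sq (𝕜 := 𝕜), hproj, norm_smul, hu, mul_one, ← RCLike.ofReal_pow, RCLike.ofReal_re]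
  ring

end

theorem krylov_complexity_bound_general
    {E : Type*} [NormedAddCommGroup E] [InnerProductSpace ℂ E]
    (u w : E) (hu : ‖u‖ = 1) (hw : ‖w‖ = 1)
    (S : E →L[ℂ] E) (hSu : (inner ℂ u (S u) : ℂ) = 0) :
    ‖(inner ℂ w (S w) : ℂ)‖ ≤ 2 * ‖S‖ * Real.sqrt (1 - ‖(inner ℂ u w : ℂ)‖ ^ 2) ∧
    ((inner ℂ w (S w) : ℂ).re) ^ 2 / (4 * ‖S‖ ^ 2) + ‖(inner ℂ u w : ℂ)‖ ^ 2 ≤ 1 := by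
  set α : ℂ := ⟪u, w⟫_ℂ
  have hα : ‖α‖ ≤ 1 := by simpa [hu, hw] using norm_inner_le_norm (𝕜 := ℂ) u w
  have hdist : ‖w - α • u‖ = Real.sqrt (1 - ‖α‖ ^ 2) := by
    have hsq := norm_sub_inner_smul_sq_s17 (𝕜 := ℂ) hu w
    rw [hw, one_pow] at hsq
    rw [← hsq, Real.sqrt_sq (norm_nonneg _)]
  have hbound : ‖⟪w, S w⟫_ℂ‖ ≤ 2 * ‖S‖ * Real.sqrt (1 - ‖α‖ ^ 2) := by
    have hlip := S.norm_inner_map_self_sub_le w (α • u)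
    rw [inner_smul_map_smul_self, hSu, mul_zero, sub_zero, hdist, hw, norm_smul, hu,
      mul_one] at hlip
    calc ‖⟪w, S w⟫_ℂ‖ ≤ ‖S‖ * Real.sqrt (1 - ‖α‖ ^ 2) * (1 + ‖α‖) := hlip
      _ ≤ ‖S‖ * Real.sqrt (1 - ‖α‖ ^ 2) * 2 := by gcongr; linarith
      _ = 2 * ‖S‖ * Real.sqrt (1 - ‖α‖ ^ 2) := by ring
  refine ⟨hbound, ?_⟩
  have hα2 : ‖α‖ ^ 2 ≤ 1 := pow_le_one₀ (norm_nonneg α) hα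
  have hre : (⟪w, S w⟫_ℂ).re ^ 2 ≤ (1 - ‖α‖ ^ 2) * (4 * ‖S‖ ^ 2) :=
    calc (⟪w, S w⟫_ℂ).re ^ 2 ≤ ‖⟪w, S w⟫_ℂ‖ ^ 2 := by
          rw [← sq_abs]; gcongr; exact Complex.abs_re_le_norm _
      _ ≤ (2 * ‖S‖ * Real.sqrt (1 - ‖α‖ ^ 2)) ^ 2 := by gcongr
      _ = (1 - ‖α‖ ^ 2) * (4 * ‖S‖ ^ 2) := by
          rw [mul_pow, Real.sq_sqrt (by linarith)]; ring
  -- `div_le_of_le_mul₀` also covers `‖S‖ = 0`, where the quotient is `0` by convention.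
  linarith [div_le_of_le_mul₀ (by positivity) (by linarith) hre]

/-- The Krylov-complexity bound (Appendix F): for a self-adjoint operator `S` with vanishing
expectation in the unit vector `u`, the expectation in any unit vector `w` satisfies
`|⟨w, S w⟩| ≤ 2‖S‖√(1 − |⟨u, w⟩|²)`; equivalently
`⟨w, S w⟩²/(4‖S‖²) + |⟨u, w⟩|² ≤ 1`. -/
theorem krylov_complexity_bound
    {E : Type*} [NormedAddCommGroup E] [InnerProductSpace ℂ E] [FiniteDimensional ℂ E]
    (u w : E) (hu : ‖u‖ = 1) (hw : ‖w‖ = 1)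
    (S : E →L[ℂ] E) (hS : IsSelfAdjoint S) (hSu : (inner ℂ u (S u) : ℂ) = 0) :
    ‖(inner ℂ w (S w) : ℂ)‖ ≤ 2 * ‖S‖ * Real.sqrt (1 - ‖(inner ℂ u w : ℂ)‖ ^ 2) ∧
    ((inner ℂ w (S w) : ℂ).re) ^ 2 / (4 * ‖S‖ ^ 2) + ‖(inner ℂ u w : ℂ)‖ ^ 2 ≤ 1 :=
  krylov_complexity_bound_general u w hu hw S hSu
end

section
/- Let T > 0, let L : E →ₗ[ℂ] E be a fixed (time-independent) linear operator, and let v : ℝ → E be differentiable on [0,T] with ‖v t‖ = 1, satisfying v'(t) = L (v t) − Re⟨v t, L (v t)⟩ • v t for all t ∈ [0,T]. Then Real.arccos ‖⟨v 0, v T⟩‖ ≤ T·‖L‖, where ‖L‖ is the operator norm of L. -/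
/-!
View `E` as a real inner product space, with real inner product `re ⟪·,·⟫_ℂ`. The right-hand
side of the normalized master equation is the component of `L (v t)` real-orthogonal to `v t`,
so the unit-speed curve `v` moves with speed at most `‖L‖`. Along a curve on the unit sphere,
`f t = ⟪v 0, v t⟫_ℝ` satisfies `|f'| ≤ ‖v'‖ √(1 - f²)`, i.e. `arccos ∘ f` grows at rate at most
`‖v'‖`; finally `arccos |⟪v 0, v T⟫_ℂ| ≤ arccos (re ⟪v 0, v T⟫_ℂ)`.
-/

open Real Set Filter Topology

theorem arccos_div_le_arccos_div_add_mul_of_abs_deriv_le {f f' : ℝ → ℝ} {a b K c : ℝ}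
    (hab : a ≤ b) (hK : 0 ≤ K) (hc : 1 < c) (hf : ContinuousOn f (Icc a b))
    (hf' : ∀ t ∈ Ioo a b, HasDerivAt f (f' t) t) (hf_le : ∀ t ∈ Icc a b, |f t| ≤ 1)
    (hf'_le : ∀ t ∈ Ioo a b, |f' t| ≤ K * √(1 - f t ^ 2)) :
    arccos (f b / c) ≤ arccos (f a / c) + K * (b - a) := by
  have hc0 : 0 < c := one_pos.trans hc
  have hlt : ∀ t ∈ Icc a b, |f t / c| < 1 := fun t ht => by
    rw [abs_div, abs_of_pos hc0, div_lt_one hc0]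
    exact (hf_le t ht).trans_lt hc
  have hderiv : ∀ t ∈ Ioo a b, HasDerivAt (fun s => arccos (f s / c))
      (-(1 / √(1 - (f t / c) ^ 2)) * (f' t / c)) t := fun t ht => by
    have h := abs_lt.1 (hlt t (Ioo_subset_Icc_self ht))
    exact (hasDerivAt_arccos h.1.ne' h.2.ne).comp (h₂ := arccos) t ((hf' t ht).div_const c)
  have hderiv_le : ∀ t ∈ Ioo a b, -(1 / √(1 - (f t / c) ^ 2)) * (f' t / c) ≤ K := by
    intro t ht
    have hpos : 0 < 1 - (f t / c) ^ 2 :=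
      sub_pos.2 ((sq_lt_one_iff_abs_lt_one _).2 (hlt t (Ioo_subset_Icc_self ht)))
    have hsqrt : √(1 - f t ^ 2) ≤ c * √(1 - (f t / c) ^ 2) := calc
      √(1 - f t ^ 2) ≤ √(c ^ 2 * (1 - (f t / c) ^ 2)) := by
        refine sqrt_le_sqrt ?_
        rw [mul_sub, mul_one, div_pow, mul_div_cancel₀ _ (pow_ne_zero 2 hc0.ne')]
        nlinarith
      _ = c * √(1 - (f t / c) ^ 2) := by rw [sqrt_mul (sq_nonneg c), sqrt_sq hc0.le]
    calc -(1 / √(1 - (f t / c) ^ 2)) * (f' t / c) = -f' t / (c * √(1 - (f t / c) ^ 2)) := by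
          ring
      _ ≤ K := by
        rw [div_le_iff₀ (mul_pos hc0 (sqrt_pos.2 hpos))]
        calc -f' t ≤ |f' t| := neg_le_abs _
          _ ≤ K * √(1 - f t ^ 2) := hf'_le t ht
          _ ≤ K * (c * √(1 - (f t / c) ^ 2)) := mul_le_mul_of_nonneg_left hsqrt hK
  have hmvt : arccos (f b / c) - arccos (f a / c) ≤ K * (b - a) := by
    refine (convex_Icc a b).image_sub_le_mul_sub_of_deriv_le (f := fun s => arccos (f s / c))
      (continuous_arccos.comp_continuousOn (hf.div_const c)) ?_ ?_
      a (left_mem_Icc.2 hab) b (right_mem_Icc.2 hab) hab <;> rw [interior_Icc]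
    · exact fun t ht => (hderiv t ht).differentiableAt.differentiableWithinAt
    · exact fun t ht => by rw [(hderiv t ht).deriv]; exact hderiv_le t ht
  linarith

/-- `arccos ∘ f` is not differentiable where `|f| = 1`, so the estimate is first proved for
`arccos (f / c)` with `c > 1` and then `c → 1`. -/
theorem arccos_le_arccos_add_mul_of_abs_deriv_le {f f' : ℝ → ℝ} {a b K : ℝ} (hab : a ≤ b)
    (hK : 0 ≤ K) (hf : ContinuousOn f (Icc a b)) (hf' : ∀ t ∈ Ioo a b, HasDerivAt f (f' t) t)
    (hf_le : ∀ t ∈ Icc a b, |f t| ≤ 1)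
    (hf'_le : ∀ t ∈ Ioo a b, |f' t| ≤ K * √(1 - f t ^ 2)) :
    arccos (f b) ≤ arccos (f a) + K * (b - a) := by
  have hlim : ∀ x : ℝ, Tendsto (fun c : ℝ => arccos (x / c)) (𝓝[>] 1) (𝓝 (arccos x)) := by
    intro x
    have : ContinuousAt (fun c => arccos (x / c)) 1 := by fun_prop (disch := norm_num)
    simpa using this.tendsto.mono_left nhdsWithin_le_nhds
  exact le_of_tendsto_of_tendsto (hlim (f b)) ((hlim (f a)).add_const _)
    (eventually_nhdsWithin_of_forall fun c hc =>
      arccos_div_le_arccos_div_add_mul_of_abs_deriv_le hab hK hc hf hf' hf_le hf'_le)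

section RealInnerProductSpace

variable {F : Type*} [NormedAddCommGroup F] [InnerProductSpace ℝ F]

local notation "⟪" x ", " y "⟫" => inner ℝ x y

theorem norm_sub_inner_smul_le {v : F} (hv : ‖v‖ = 1) (w : F) : ‖w - ⟪v, w⟫ • v‖ ≤ ‖w‖ := by
  have hsq : ‖w - ⟪v, w⟫ • v‖ ^ 2 = ‖w‖ ^ 2 - ⟪v, w⟫ ^ 2 := by
    rw [norm_sub_sq_real, real_inner_smul_right, norm_smul, hv, real_inner_comm, norm_eq_abs,
      mul_one, sq_abs]
    ring
  exact (pow_le_pow_iff_left₀ (norm_nonneg _) (norm_nonneg _) two_ne_zero).1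
    (hsq ▸ sub_le_self _ (sq_nonneg _))

theorem inner_eq_zero_of_hasDerivAt_of_norm_eventually_eq {γ : ℝ → F} {γ' : F} {t r : ℝ}
    (hγ : HasDerivAt γ γ' t) (hnorm : ∀ᶠ s in 𝓝 t, ‖γ s‖ = r) : ⟪γ t, γ'⟫ = 0 := by
  have hconst : HasDerivAt (fun s => ‖γ s‖ ^ 2) 0 t :=
    (hasDerivAt_const t (r ^ 2)).congr_of_eventuallyEq (hnorm.mono fun s hs => by simp only [hs])
  simpa using hγ.norm_sq.unique hconst

theorem abs_inner_le_norm_mul_sqrt_of_inner_eq_zero {a b x : F} (ha : ‖a‖ = 1) (hb : ‖b‖ = 1)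
    (hbx : ⟪b, x⟫ = 0) : |⟪a, x⟫| ≤ ‖x‖ * √(1 - ⟪a, b⟫ ^ 2) := by
  have hproj : ⟪a, x⟫ = ⟪a - ⟪a, b⟫ • b, x⟫ := by
    rw [inner_sub_left, real_inner_smul_left, hbx, mul_zero, sub_zero]
  have hnorm : ‖a - ⟪a, b⟫ • b‖ = √(1 - ⟪a, b⟫ ^ 2) := by
    rw [← sqrt_sq (norm_nonneg _), norm_sub_sq_real, real_inner_smul_right, norm_smul, ha, hb,
      norm_eq_abs, mul_one, sq_abs]
    ring_nf
  calc |⟪a, x⟫| ≤ ‖a - ⟪a, b⟫ • b‖ * ‖x‖ := hproj ▸ abs_real_inner_le_norm _ _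
    _ = ‖x‖ * √(1 - ⟪a, b⟫ ^ 2) := by rw [hnorm, mul_comm]

theorem arccos_inner_le_mul_of_norm_deriv_le {γ γ' : ℝ → F} {a b K : ℝ} (hab : a ≤ b)
    (hK : 0 ≤ K) (hγ : ContinuousOn γ (Icc a b)) (hγ' : ∀ t ∈ Ioo a b, HasDerivAt γ (γ' t) t)
    (hnorm : ∀ t ∈ Icc a b, ‖γ t‖ = 1) (hspeed : ∀ t ∈ Ioo a b, ‖γ' t‖ ≤ K) :
    arccos ⟪γ a, γ b⟫ ≤ K * (b - a) := by
  have ha : a ∈ Icc a b := left_mem_Icc.2 hab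
  have hderiv : ∀ t ∈ Ioo a b, HasDerivAt (fun s => ⟪γ a, γ s⟫) ⟪γ a, γ' t⟫ t := fun t ht =>
    (innerSL ℝ (γ a)).hasFDerivAt.comp_hasDerivAt t (hγ' t ht)
  have hdist := arccos_le_arccos_add_mul_of_abs_deriv_le (f := fun t => ⟪γ a, γ t⟫) hab hK
    ((innerSL ℝ (γ a)).continuous.comp_continuousOn hγ) hderiv
    (fun t ht => by simpa [hnorm a ha, hnorm t ht] using abs_real_inner_le_norm (γ a) (γ t))
    (fun t ht => by
      have htan : ⟪γ t, γ' t⟫ = 0 := inner_eq_zero_of_hasDerivAt_of_norm_eventually_eq (hγ' t ht)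
        (eventually_of_mem (Icc_mem_nhds ht.1 ht.2) hnorm)
      calc |⟪γ a, γ' t⟫| ≤ ‖γ' t‖ * √(1 - ⟪γ a, γ t⟫ ^ 2) :=
            abs_inner_le_norm_mul_sqrt_of_inner_eq_zero (hnorm a ha)
              (hnorm t (Ioo_subset_Icc_self ht)) htan
        _ ≤ K * √(1 - ⟪γ a, γ t⟫ ^ 2) :=
            mul_le_mul_of_nonneg_right (hspeed t ht) (sqrt_nonneg _))
  rwa [real_inner_self_eq_norm_sq, hnorm a ha, one_pow, arccos_one, zero_add] at hdist

end RealInnerProductSpace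

theorem speed_limit_operator_norm_general
    {E : Type*} [NormedAddCommGroup E] [InnerProductSpace ℂ E]
    (T : ℝ) (hT : 0 < T) (L : E →L[ℂ] E) (v : ℝ → E)
    (hnorm : ∀ t ∈ Set.Icc (0 : ℝ) T, ‖v t‖ = 1)
    (hode : ∀ t ∈ Set.Icc (0 : ℝ) T,
      HasDerivAt v (L (v t) - (inner ℂ (v t) (L (v t)) : ℂ).re • v t) t) :
    Real.arccos ‖(inner ℂ (v 0) (v T) : ℂ)‖ ≤ T * ‖L‖ := by
  let : InnerProductSpace ℝ E := InnerProductSpace.complexToReal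
  have hspeed : ∀ t ∈ Ioo 0 T, ‖L (v t) - (inner ℂ (v t) (L (v t)) : ℂ).re • v t‖ ≤ ‖L‖ :=
    fun t ht => calc
      _ ≤ ‖L (v t)‖ := norm_sub_inner_smul_le (hnorm t (Ioo_subset_Icc_self ht)) _
      _ ≤ ‖L‖ * 1 := L.le_opNorm_of_le (hnorm t (Ioo_subset_Icc_self ht)).le
      _ = ‖L‖ := mul_one _
  calc Real.arccos ‖(inner ℂ (v 0) (v T) : ℂ)‖ ≤ arccos (inner ℝ (v 0) (v T)) :=
        arccos_le_arccos (Complex.re_le_norm _)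
    _ ≤ ‖L‖ * (T - 0) := arccos_inner_le_mul_of_norm_deriv_le hT.le (norm_nonneg L)
        (fun t ht => (hode t ht).continuousAt.continuousWithinAt)
        (fun t ht => hode t (Ioo_subset_Icc_self ht)) hnorm hspeed
    _ = T * ‖L‖ := by ring

/-- Computable speed limit for a time-independent Liouvillian: `arccos|⟨v 0, v T⟩| ≤ T ‖L‖`,
following from Theorem 1 and the bound `ΔL ≤ ‖L‖_op`. -/
theorem speed_limit_operator_norm
    {E : Type*} [NormedAddCommGroup E] [InnerProductSpace ℂ E] [FiniteDimensional ℂ E]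
    (T : ℝ) (hT : 0 < T) (L : E →L[ℂ] E) (v : ℝ → E)
    (hnorm : ∀ t ∈ Set.Icc (0 : ℝ) T, ‖v t‖ = 1)
    (hode : ∀ t ∈ Set.Icc (0 : ℝ) T,
      HasDerivAt v (L (v t) - (inner ℂ (v t) (L (v t)) : ℂ).re • v t) t) :
    Real.arccos ‖(inner ℂ (v 0) (v T) : ℂ)‖ ≤ T * ‖L‖ :=
  speed_limit_operator_norm_general T hT L v hnorm hode
end

section
/- Let n be a finite type, γ ∈ ℝ, ρ₀ a Hermitian n×n complex matrix, and U an n×n complex matrix with U * Uᴴ = 1. Set ρ₀⊥ := U * ρ₀ * Uᴴ and assume U * ρ₀⊥ * Uᴴ = ρ₀. Define ρ : ℝ → Matrix n n ℂ by ρ t := ((1 + Real.exp (−2·γ·t))/2 : ℝ) • ρ₀ + ((1 − Real.exp (−2·γ·t))/2 : ℝ) • ρ₀⊥. Then ρ 0 = ρ₀ and for every t ∈ ℝ, ρ has derivative γ • (U * (ρ t) * Uᴴ − ρ t) at t; i.e., ρ solves the master equation dρ/dt = γ(U ρ U† − ρ) generated by the Liouvillian 𝓛 = γ(U* ⊗ U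 − I ⊗ I), and the time-evolved state stays on the line segment ρ_t = P_t ρ₀ + (1 − P_t) ρ₀⊥ with P_t = (1 + e^{−2γt})/2. -/
open scoped Matrix

attribute [local instance] Matrix.normedAddCommGroup Matrix.normedSpace

/-- Eq. (7)–(8) of the paper: the Lindblad generator `𝔏(ρ) = γ(UρU† − ρ)` with a single
unitary Lindblad operator `U` satisfying `U ρ₀⊥ U† = ρ₀` generates the time-optimal CPTP
dynamics whose state traces the line segment (geodesic)
`ρ_t = P_t ρ₀ + (1 − P_t) ρ₀⊥` with `P_t = (1 + e^{−2γt})/2`. -/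
theorem optimal_dynamics_geodesic
    {n : Type*} [Fintype n] [DecidableEq n] (γ : ℝ)
    (ρ₀ U : Matrix n n ℂ) (hρ : ρ₀.IsHermitian) (hU : U * Uᴴ = 1)
    (hperp : U * (U * ρ₀ * Uᴴ) * Uᴴ = ρ₀) :
    let ρperp : Matrix n n ℂ := U * ρ₀ * Uᴴ
    let ρ : ℝ → Matrix n n ℂ := fun t =>
      (((1 + Real.exp (-2 * γ * t)) / 2 : ℝ)) • ρ₀ +
        (((1 - Real.exp (-2 * γ * t)) / 2 : ℝ)) • ρperp
    ρ 0 = ρ₀ ∧ ∀ t : ℝ, HasDerivAt ρ (γ • (U * ρ t * Uᴴ - ρ t)) t := by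
  intro ρperp ρ
  constructor
  · simp [ρ]
  · intro t
    have he : HasDerivAt (fun s : ℝ => Real.exp (-2 * γ * s))
        ((-2 * γ) * Real.exp (-2 * γ * t)) t := by
      simpa [mul_comm] using ((hasDerivAt_id t).const_mul (-2 * γ)).exp
    have ha : HasDerivAt (fun s : ℝ => (1 + Real.exp (-2 * γ * s)) / 2)
        (((-2 * γ) * Real.exp (-2 * γ * t)) / 2) t := by
      simpa using ((he.const_add 1).div_const 2)
    have hb : HasDerivAt (fun s : ℝ => (1 - Real.exp (-2 * γ * s)) / 2)
        ((-((-2 * γ) * Real.exp (-2 * γ * t))) / 2) t := by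
      simpa using ((he.const_sub 1).div_const 2)
    have hd : HasDerivAt ρ
        ((((-2 * γ) * Real.exp (-2 * γ * t)) / 2) • ρ₀ +
          ((-((-2 * γ) * Real.exp (-2 * γ * t))) / 2) • ρperp) t :=
      (ha.smul_const ρ₀).add (hb.smul_const ρperp)
    convert hd using 1
    have hUρ : U * ρ t * Uᴴ =
        (((1 + Real.exp (-2 * γ * t)) / 2 : ℝ)) • ρperp +
        (((1 - Real.exp (-2 * γ * t)) / 2 : ℝ)) • ρ₀ := by
      simp only [ρ, ρperp, Matrix.mul_add, Matrix.add_mul, Matrix.mul_smul,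
        Matrix.smul_mul, hperp]

    rw [hUρ]
    show γ • _ = _
    simp only [ρ]
    module
end
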